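/- A holomorphic function f : SL_2(C) → C with H0 · f = k f for k < 0 and H++ · f = 0 is identically zero. -/

import Mathlib

/-! Fix `U ∈ SL₂(ℂ)` and put `g z = f (U * [[1, 0], [z, 1]])`, an entire function. The equation
`H₊₊ f = 0` makes `f` invariant under right translation by upper unipotents, and `H₀ f = k f`
makes it transform by `a ^ k` under right translation by `diag(a, a⁻¹)`. The Bruhat decomposition
`[[1, 0], [z, 1]] = n(z⁻¹) w diag(-z, -z⁻¹) n(z⁻¹)` therefore gives `g z = (-z) ^ k f (U n(z⁻¹) w)`
for `z ≠ 0`. As `z → ∞` the second factor tends to `f (U w)` and, since `k < 0`, the first tends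
to `0`; so `g` vanishes at infinity, Liouville gives `g = 0`, and `f U = g 0 = 0`. -/

open Matrix

noncomputable section

attribute [local instance] Matrix.normedAddCommGroup Matrix.normedSpace

/-- SL₂(ℂ) as a subset of the 2×2 complex matrices. -/
def SL2 : Set (Matrix (Fin 2) (Fin 2) ℂ) := {U | U.det = 1}

/-- A function is holomorphic on SL₂(ℂ) iff it is holomorphic on an open neighbourhood of
SL₂(ℂ) in the matrix space (SL₂(ℂ) is a closed Stein submanifold, so this is equivalent to
intrinsic holomorphy). -/
def HolSL2 (f : Matrix (Fin 2) (Fin 2) ℂ → ℂ) : Prop :=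
  ∃ Ω : Set (Matrix (Fin 2) (Fin 2) ℂ), IsOpen Ω ∧ SL2 ⊆ Ω ∧ DifferentiableOn ℂ f Ω

/-- Directional derivative of f along the left-invariant vector field corresponding to
X ∈ sl₂(ℂ), at the point U: (X·f)(U) = df_U(U·X). -/
def lieD (X : Matrix (Fin 2) (Fin 2) ℂ) (f : Matrix (Fin 2) (Fin 2) ℂ → ℂ)
    (U : Matrix (Fin 2) (Fin 2) ℂ) : ℂ := fderiv ℂ f U (U * X)

def H0m : Matrix (Fin 2) (Fin 2) ℂ := !![1, 0; 0, -1]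
def Hppm : Matrix (Fin 2) (Fin 2) ℂ := !![0, 1; 0, 0]
def Hmmm : Matrix (Fin 2) (Fin 2) ℂ := !![0, 0; 1, 0]

open Filter Topology

theorem eq_exp_mul_of_hasDerivAt {φ : ℂ → ℂ} {c : ℂ} (hφ : ∀ s, HasDerivAt φ (c * φ s) s)
    (t : ℂ) : φ t = Complex.exp (c * t) * φ 0 := by
  have hconst : ∀ s, HasDerivAt (fun s => Complex.exp (-c * s) * φ s) 0 s := fun s => by
    have he : HasDerivAt (fun s => Complex.exp (-c * s)) (Complex.exp (-c * s) * -c) s := by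
      simpa using ((hasDerivAt_id s).const_mul (-c)).cexp
    exact (he.mul (hφ s)).congr_deriv (by ring)
  have h := is_const_of_deriv_eq_zero (fun s => (hconst s).differentiableAt)
    (fun s => (hconst s).deriv) t 0
  rw [mul_zero, Complex.exp_zero, one_mul] at h
  rw [← h, ← mul_assoc, ← Complex.exp_add, neg_mul, add_neg_cancel, Complex.exp_zero, one_mul]

section

local notation "𝕄" => Matrix (Fin 2) (Fin 2) ℂ

def unipUpper (t : ℂ) : 𝕄 := 1 + t • Hppm
def unipLower (z : ℂ) : 𝕄 := 1 + z • Hmmm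
def diagSL2 (a : ℂ) : 𝕄 := diagonal ![a, a⁻¹]
def weylElt : 𝕄 := !![0, 1; -1, 0]

theorem mul_mem_SL2 {M N : 𝕄} (hM : M ∈ SL2) (hN : N ∈ SL2) : M * N ∈ SL2 := by
  simp_all [SL2, det_mul]

theorem unipUpper_mem_SL2 (t : ℂ) : unipUpper t ∈ SL2 := by
  simp [SL2, unipUpper, Hppm, det_fin_two, one_apply]

theorem unipLower_mem_SL2 (z : ℂ) : unipLower z ∈ SL2 := by
  simp [SL2, unipLower, Hmmm, det_fin_two, one_apply]

theorem diagSL2_mem_SL2 {a : ℂ} (ha : a ≠ 0) : diagSL2 a ∈ SL2 := by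
  simp [SL2, diagSL2, det_fin_two, ha]

theorem weylElt_mem_SL2 : weylElt ∈ SL2 := by
  simp [SL2, weylElt, det_fin_two]

theorem unipLower_eq_bruhat {z : ℂ} (hz : z ≠ 0) :
    unipLower z = unipUpper z⁻¹ * weylElt * diagSL2 (-z) * unipUpper z⁻¹ := by
  ext i j; fin_cases i <;> fin_cases j <;>
    simp [unipLower, unipUpper, weylElt, diagSL2, Hppm, Hmmm, one_apply, mul_apply,
      Fin.sum_univ_two, hz]

theorem HolSL2.differentiableAt {f : 𝕄 → ℂ} (hf : HolSL2 f) {U : 𝕄} (hU : U ∈ SL2) :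
    DifferentiableAt ℂ f U := by
  obtain ⟨Ω, hΩ, hsub, hd⟩ := hf
  exact hd.differentiableAt (hΩ.mem_nhds (hsub hU))

variable {f : 𝕄 → ℂ}

theorem apply_eq_exp_mul_of_lieD_eq (hf : HolSL2 f) {X : 𝕄} {c : ℂ}
    (hX : ∀ U ∈ SL2, lieD X f U = c * f U) {γ : ℂ → 𝕄} (hγ : ∀ s, γ s ∈ SL2)
    (hγ' : ∀ s, HasDerivAt γ (γ s * X) s) (t : ℂ) :
    f (γ t) = Complex.exp (c * t) * f (γ 0) :=
  eq_exp_mul_of_hasDerivAt (φ := f ∘ γ) (fun s =>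
    (hX _ (hγ s)) ▸ (hf.differentiableAt (hγ s)).hasFDerivAt.comp_hasDerivAt s (hγ' s)) t

theorem apply_mul_unipUpper (hf : HolSL2 f) (hHpp : ∀ U ∈ SL2, lieD Hppm f U = 0)
    {M : 𝕄} (hM : M ∈ SL2) (t : ℂ) : f (M * unipUpper t) = f M := by
  have hγ' : ∀ s, HasDerivAt (fun s => M * unipUpper s) (M * unipUpper s * Hppm) s := by
    intro s
    have hHpp_sq : Hppm * Hppm = 0 := by
      ext i j; fin_cases i <;> fin_cases j <;> simp [Hppm, mul_apply, Fin.sum_univ_two]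
    simp only [unipUpper, mul_add, mul_one, mul_smul_comm, add_mul, smul_mul_assoc, mul_assoc,
      hHpp_sq, mul_zero, smul_zero, add_zero]
    exact ((hasDerivAt_id s).smul_const (M * Hppm)).const_add M |>.congr_deriv (one_smul _ _)
  simpa [unipUpper] using apply_eq_exp_mul_of_lieD_eq hf (c := 0) (by simpa using hHpp)
    (fun s => mul_mem_SL2 hM (unipUpper_mem_SL2 s)) hγ' t

theorem hasDerivAt_mul_diagSL2_exp (M : 𝕄) (s : ℂ) :
    HasDerivAt (fun s => M * diagSL2 (Complex.exp s)) (M * diagSL2 (Complex.exp s) * H0m) s := by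
  refine hasDerivAt_pi.2 fun i => hasDerivAt_pi.2 fun j => ?_
  fin_cases j
  · simpa [diagSL2, H0m, mul_apply, Fin.sum_univ_two] using
      (Complex.hasDerivAt_exp s).const_mul (M i 0)
  · simpa [diagSL2, H0m, mul_apply, Fin.sum_univ_two, ← Complex.exp_neg] using
      ((Complex.hasDerivAt_exp (-s)).comp s (hasDerivAt_neg s)).const_mul (M i 1)

theorem apply_mul_diagSL2 (hf : HolSL2 f) {k : ℤ} (hH0 : ∀ U ∈ SL2, lieD H0m f U = k * f U)
    {M : 𝕄} (hM : M ∈ SL2) {a : ℂ} (ha : a ≠ 0) : f (M * diagSL2 a) = a ^ k * f M := by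
  have h := apply_eq_exp_mul_of_lieD_eq hf hH0
    (fun s => mul_mem_SL2 hM (diagSL2_mem_SL2 (Complex.exp_ne_zero s)))
    (hasDerivAt_mul_diagSL2_exp M) (Complex.log a)
  have hdiag_one : diagSL2 1 = 1 := by simp [diagSL2, ← diagonal_one]
  rwa [Complex.exp_log ha, Complex.exp_int_mul, Complex.exp_log ha, Complex.exp_zero, hdiag_one,
    mul_one] at h

theorem apply_mul_unipLower (hf : HolSL2 f) {k : ℤ}
    (hH0 : ∀ U ∈ SL2, lieD H0m f U = k * f U) (hHpp : ∀ U ∈ SL2, lieD Hppm f U = 0)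
    {U : 𝕄} (hU : U ∈ SL2) {z : ℂ} (hz : z ≠ 0) :
    f (U * unipLower z) = (-z) ^ k * f (U * unipUpper z⁻¹ * weylElt) := by
  have hM : U * unipUpper z⁻¹ * weylElt ∈ SL2 :=
    mul_mem_SL2 (mul_mem_SL2 hU (unipUpper_mem_SL2 _)) weylElt_mem_SL2
  rw [unipLower_eq_bruhat hz, ← mul_assoc, ← mul_assoc, ← mul_assoc,
    apply_mul_unipUpper hf hHpp (mul_mem_SL2 hM (diagSL2_mem_SL2 (neg_ne_zero.2 hz))),
    apply_mul_diagSL2 hf hH0 hM (neg_ne_zero.2 hz)]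

theorem differentiable_apply_mul_unipLower (hf : HolSL2 f) {U : 𝕄} (hU : U ∈ SL2) :
    Differentiable ℂ (fun z => f (U * unipLower z)) := fun z => by
  have hcurve : (fun z : ℂ => U * unipLower z) = fun z => U + z • (U * Hmmm) := by
    funext z; rw [unipLower, mul_add, mul_one, mul_smul_comm]
  refine (hf.differentiableAt (mul_mem_SL2 hU (unipLower_mem_SL2 z))).comp z ?_
  rw [hcurve]
  fun_prop

theorem tendsto_apply_mul_unipLower_cocompact (hf : HolSL2 f) {k : ℤ} (hk : k < 0)
    (hH0 : ∀ U ∈ SL2, lieD H0m f U = k * f U) (hHpp : ∀ U ∈ SL2, lieD Hppm f U = 0)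
    {U : 𝕄} (hU : U ∈ SL2) :
    Tendsto (fun z => f (U * unipLower z)) (cocompact ℂ) (𝓝 0) := by
  have hpow : Tendsto (fun z : ℂ => (-z) ^ k) (cocompact ℂ) (𝓝 0) := by
    rw [tendsto_zero_iff_norm_tendsto_zero]
    simpa only [norm_zpow, norm_neg, Function.comp_def] using
      (tendsto_zpow_atTop_zero hk).comp (tendsto_norm_cocompact_atTop (E := ℂ))
  have hcont : ContinuousAt (fun c => f (U * unipUpper c * weylElt)) 0 := by
    refine ContinuousAt.comp (g := f) ?_ (by unfold unipUpper; fun_prop)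
    exact (hf.differentiableAt (mul_mem_SL2 (mul_mem_SL2 hU (unipUpper_mem_SL2 0))
      weylElt_mem_SL2)).continuousAt
  have hinv : Tendsto (fun z : ℂ => z⁻¹) (cocompact ℂ) (𝓝 0) := by
    simpa only [← Metric.cobounded_eq_cocompact] using tendsto_inv₀_cobounded
  have h := hpow.mul (hcont.tendsto.comp hinv)
  rw [zero_mul] at h
  refine h.congr' ?_
  filter_upwards [cocompact_le_cofinite (eventually_cofinite_ne 0)] with z hz
  exact (apply_mul_unipLower hf hH0 hHpp hU hz).symm

end

theorem stmt_11 (f : Matrix (Fin 2) (Fin 2) ℂ → ℂ) (hf : HolSL2 f) (k : ℤ) (hk : k < 0)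
    (hch : ∀ U ∈ SL2, lieD H0m f U = (k : ℂ) * f U)
    (heq : ∀ U ∈ SL2, lieD Hppm f U = 0) :
    ∀ U ∈ SL2, f U = 0 := by
  intro U hU
  simpa [unipLower] using (differentiable_apply_mul_unipLower hf hU).apply_eq_of_tendsto_cocompact
    0 (tendsto_apply_mul_unipLower_cocompact hf hk hch heq hU)
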